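/- arXiv:1405.4006 — 3 statements merged into one kernel-verified Lean document; each statement's English description precedes it below -/
import Mathlib

section
/- Let C and D be nonempty nearly convex subsets of X such that ri C ∩ ri D ≠ ∅. Then C ∩ D is nearly convex. -/
open Set Pointwise

/-!
Parametrizing the affine span of a set isometrically by its direction turns the relative
interior into an ordinary interior, so the classical facts about a convex set `s` (open segments
from interior points to closure points stay in the interior; `interior (closure s) = interior s`
when the interior is nonempty) carry over to relative interiors.

Write `C₀ ⊆ C ⊆ closure C₀` and `D₀ ⊆ D ⊆ closure D₀` with `C₀`, `D₀` convex. Then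
`ri C ⊆ ri C₀` and `ri D ⊆ ri D₀`, so a common point `x` of `ri C` and `ri D` lies in the convex
set `ri C₀ ∩ ri D₀ ⊆ C ∩ D`. For `u ∈ C ∩ D` the open segment from `x` to `u` lies in that set,
and `u` is in its closure.
-/

/-- A set is nearly convex if it is sandwiched between a convex set and its closure. -/
def NearlyConvex {X : Type*} [NormedAddCommGroup X] [NormedSpace ℝ X] (S : Set X) : Prop :=
  ∃ C : Set X, Convex ℝ C ∧ C ⊆ S ∧ S ⊆ closure C

/-- Two sets are nearly equal if they have the same closure and the same relative
(intrinsic) interior. -/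
def NearEq {X : Type*} [NormedAddCommGroup X] [NormedSpace ℝ X] (C D : Set X) : Prop :=
  closure C = closure D ∧ intrinsicInterior ℝ C = intrinsicInterior ℝ D

section

variable {X : Type*} [NormedAddCommGroup X] [NormedSpace ℝ X]

/-- `v ↦ v + p`, parametrizing the affine subspace through `p` with direction `V`. -/
noncomputable def affineChart (V : Submodule ℝ X) (p : X) : V →ᵃⁱ[ℝ] X :=
  (AffineIsometryEquiv.vaddConst ℝ p).toAffineIsometry.comp V.subtypeₗᵢ.toAffineIsometry

theorem range_affineChart {A : AffineSubspace ℝ X} {p : X} (hp : p ∈ A) :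
    range (affineChart A.direction p) = A := by
  ext x
  constructor
  · rintro ⟨v, rfl⟩
    exact AffineSubspace.vadd_mem_of_mem_direction v.2 hp
  · intro hx
    exact ⟨⟨x -ᵥ p, AffineSubspace.vsub_mem_direction hx hp⟩, vsub_vadd x p⟩

theorem intrinsicInterior_eq_image_affineChart {s : Set X} {A : AffineSubspace ℝ X}
    (hA : affineSpan ℝ s = A) {p : X} (hp : p ∈ A) :
    intrinsicInterior ℝ s =
      affineChart A.direction p '' interior (affineChart A.direction p ⁻¹' s) := by
  subst hA
  have : Nonempty (affineSpan ℝ s) := ⟨⟨p, hp⟩⟩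
  let e := (AffineIsometryEquiv.vaddConst ℝ (⟨p, hp⟩ : affineSpan ℝ s)).toHomeomorph
  have he : ((↑) : affineSpan ℝ s → X) ∘ e = affineChart _ p := rfl
  rw [intrinsicInterior, ← he, image_comp, preimage_comp, ← e.preimage_interior,
    e.image_preimage]

theorem closure_preimage_affineChart {V : Submodule ℝ X} {p : X} {s : Set X}
    (hs : s ⊆ range (affineChart V p)) :
    closure (affineChart V p ⁻¹' s) = affineChart V p ⁻¹' closure s := by
  rw [(affineChart V p).isometry.isEmbedding.isInducing.closure_eq_preimage_closure_image,
    image_preimage_eq_of_subset hs]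

section FiniteDimensional

variable [FiniteDimensional ℝ X]

theorem closure_subset_affineSpan (s : Set X) : closure s ⊆ affineSpan ℝ s :=
  intrinsicClosure_eq_closure ℝ s ▸ intrinsicClosure_subset_affineSpan

theorem Convex.openSegment_intrinsicInterior_closure_subset_intrinsicInterior {s : Set X}
    (hs : Convex ℝ s) {x y : X} (hx : x ∈ intrinsicInterior ℝ s) (hy : y ∈ closure s) :
    openSegment ℝ x y ⊆ intrinsicInterior ℝ s := by
  obtain ⟨p, hp⟩ : (affineSpan ℝ s : Set X).Nonempty :=
    ⟨x, subset_affineSpan ℝ s (intrinsicInterior_subset hx)⟩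
  set φ := affineChart (affineSpan ℝ s).direction p
  have hφ : range φ = affineSpan ℝ s := range_affineChart hp
  rw [intrinsicInterior_eq_image_affineChart rfl hp] at hx ⊢
  obtain ⟨x', hx', rfl⟩ := hx
  obtain ⟨y', rfl⟩ : y ∈ range φ := hφ ▸ closure_subset_affineSpan s hy
  have hy' : y' ∈ closure (φ ⁻¹' s) := by
    rwa [closure_preimage_affineChart (hφ ▸ subset_affineSpan ℝ s)]
  rw [← show φ '' openSegment ℝ x' y' = openSegment ℝ (φ x') (φ y') from
    image_openSegment ℝ φ.toAffineMap x' y']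
  exact image_mono
    ((hs.affine_preimage φ.toAffineMap).openSegment_interior_closure_subset_interior hx' hy')

theorem Convex.intrinsicInterior_subset_of_subset_closure {s t : Set X} (hs : Convex ℝ s)
    (hst : s ⊆ t) (hts : t ⊆ closure s) : intrinsicInterior ℝ t ⊆ intrinsicInterior ℝ s := by
  rcases s.eq_empty_or_nonempty with rfl | hsne
  · simp_all
  obtain ⟨p, hp⟩ := hsne
  have hspan : affineSpan ℝ t = affineSpan ℝ s :=
    le_antisymm (affineSpan_le.2 (hts.trans (closure_subset_affineSpan s))) (affineSpan_mono ℝ hst)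
  have hp' := subset_affineSpan ℝ s hp
  set φ := affineChart (affineSpan ℝ s).direction p
  have hint : (interior (φ ⁻¹' s)).Nonempty := by
    have := (Set.nonempty_of_mem hp).intrinsicInterior hs
    rw [intrinsicInterior_eq_image_affineChart rfl hp'] at this
    exact this.of_image
  have hs' : Convex ℝ (φ ⁻¹' s) := hs.affine_preimage φ.toAffineMap
  rw [intrinsicInterior_eq_image_affineChart hspan hp',
    intrinsicInterior_eq_image_affineChart rfl hp',
    ← hs'.interior_closure_eq_interior_of_nonempty_interior hint,
    closure_preimage_affineChart (range_affineChart hp' ▸ subset_affineSpan ℝ s)]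
  exact image_mono (interior_mono (preimage_mono hts))

end FiniteDimensional

theorem Convex.intrinsicInterior {s : Set X} (hs : Convex ℝ s) :
    Convex ℝ (intrinsicInterior ℝ s) := by
  rcases s.eq_empty_or_nonempty with rfl | ⟨p, hp⟩
  · simp [convex_empty]
  rw [intrinsicInterior_eq_image_affineChart rfl (subset_affineSpan ℝ s hp)]
  exact (hs.affine_preimage _).interior.affine_image _

end

theorem inter_nearlyConvex_general {X : Type*} [NormedAddCommGroup X] [InnerProductSpace ℝ X]
    [FiniteDimensional ℝ X] (C D : Set X)
    (hC : NearlyConvex C) (hD : NearlyConvex D)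
    (hri : (intrinsicInterior ℝ C ∩ intrinsicInterior ℝ D).Nonempty) :
    NearlyConvex (C ∩ D) := by
  obtain ⟨C₀, hC₀, hC₀C, hCC₀⟩ := hC
  obtain ⟨D₀, hD₀, hD₀D, hDD₀⟩ := hD
  obtain ⟨x, hxC, hxD⟩ := hri
  replace hxC := hC₀.intrinsicInterior_subset_of_subset_closure hC₀C hCC₀ hxC
  replace hxD := hD₀.intrinsicInterior_subset_of_subset_closure hD₀D hDD₀ hxD
  refine ⟨intrinsicInterior ℝ C₀ ∩ intrinsicInterior ℝ D₀,
    hC₀.intrinsicInterior.inter hD₀.intrinsicInterior,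
    inter_subset_inter (intrinsicInterior_subset.trans hC₀C) (intrinsicInterior_subset.trans hD₀D),
    fun u ⟨huC, huD⟩ => ?_⟩
  have hseg : openSegment ℝ x u ⊆ intrinsicInterior ℝ C₀ ∩ intrinsicInterior ℝ D₀ :=
    subset_inter
      (hC₀.openSegment_intrinsicInterior_closure_subset_intrinsicInterior hxC (hCC₀ huC))
      (hD₀.openSegment_intrinsicInterior_closure_subset_intrinsicInterior hxD (hDD₀ huD))
  exact closure_mono hseg (segment_subset_closure_openSegment (right_mem_segment ℝ x u))

/-- If `C` and `D` are nonempty nearly convex subsets of a finite-dimensional real inner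
product space with `ri C ∩ ri D ≠ ∅`, then `C ∩ D` is nearly convex. -/
theorem inter_nearlyConvex {X : Type*} [NormedAddCommGroup X] [InnerProductSpace ℝ X]
    [FiniteDimensional ℝ X] (C D : Set X) (hCne : C.Nonempty) (hDne : D.Nonempty)
    (hC : NearlyConvex C) (hD : NearlyConvex D)
    (hri : (intrinsicInterior ℝ C ∩ intrinsicInterior ℝ D).Nonempty) :
    NearlyConvex (C ∩ D) :=
  inter_nearlyConvex_general C D hC hD hri
end

section
/- Let C and D be nonempty nearly convex subsets of X such that ri C ∩ ri D ≠ ∅. Then cl(C ∩ D) = cl C ∩ cl D. -/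
open Set Pointwise

/-!
Given `z ∈ ri C ∩ ri D` and `y ∈ cl C ∩ cl D`, the open segment from `z` to `y` lies in `C ∩ D`
and accumulates at `y`. This line segment principle for a nearly convex `S`, with convex
`C₀ ⊆ S ⊆ cl C₀`, follows by identifying the affine span of `S` with a vector space, in which `S`
has nonempty interior: there `int S ⊆ int (cl C₀) = int C₀`, and the classical principle for the
convex set `C₀` applies.
-/

open Topology

section

variable {E X : Type*} [NormedAddCommGroup E] [NormedSpace ℝ E]
  [NormedAddCommGroup X] [NormedSpace ℝ X]

theorem Topology.IsEmbedding.closure_preimage_of_subset_range {α β : Type*} [TopologicalSpace α]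
    [TopologicalSpace β] {f : α → β} (hf : IsEmbedding f) {t : Set β} (ht : t ⊆ range f) :
    closure (f ⁻¹' t) = f ⁻¹' closure t := by
  rw [hf.closure_eq_preimage_closure_image, image_preimage_eq_of_subset ht]

theorem Convex.interior_closure_eq_interior [FiniteDimensional ℝ E] {C : Set E}
    (hC : Convex ℝ C) : interior (closure C) = interior C := by
  rcases (interior (closure C)).eq_empty_or_nonempty with h | h
  · exact h.trans (subset_empty_iff.1 (h ▸ interior_mono subset_closure)).symm
  refine hC.interior_closure_eq_interior_of_nonempty_interior ?_
  rw [hC.interior_nonempty_iff_affineSpan_eq_top, eq_top_iff]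
  rw [hC.closure.interior_nonempty_iff_affineSpan_eq_top] at h
  exact h ▸ affineSpan_le.2 (closure_minimal (subset_affineSpan ℝ C)
    (affineSpan ℝ C).closed_of_finiteDimensional)

theorem intrinsicInterior_eq_interior_of_affineSpan_eq_top {𝕜 V P : Type*} [Ring 𝕜]
    [AddCommGroup V] [Module 𝕜 V] [TopologicalSpace P] [AddTorsor V P] {s : Set P}
    (hs : affineSpan 𝕜 s = ⊤) : intrinsicInterior 𝕜 s = interior s := by
  have hval : IsHomeomorph ((↑) : affineSpan 𝕜 s → P) :=
    isHomeomorph_iff_isEmbedding_surjective.2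
      ⟨IsEmbedding.subtypeVal, fun x ↦ ⟨⟨x, hs ▸ trivial⟩, rfl⟩⟩
  rw [intrinsicInterior, hval.image_interior, image_preimage_eq _ hval.surjective]

namespace NearlyConvex

theorem openSegment_subset_of_mem_interior [FiniteDimensional ℝ E] {S : Set E}
    (hS : NearlyConvex S) {z y : E} (hz : z ∈ interior S) (hy : y ∈ closure S) :
    openSegment ℝ z y ⊆ S := by
  obtain ⟨C, hCconv, hCS, hSC⟩ := hS
  have hzC : z ∈ interior C := hCconv.interior_closure_eq_interior ▸ interior_mono hSC hz
  have hyC : y ∈ closure C := closure_minimal hSC isClosed_closure hy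
  exact (hCconv.openSegment_interior_closure_subset_interior hzC hyC).trans
    (interior_subset.trans hCS)

theorem preimage_affineIsometry {S : Set X} (hS : NearlyConvex S) (φ : E →ᵃⁱ[ℝ] X)
    (hSφ : S ⊆ range φ) : NearlyConvex (φ ⁻¹' S) := by
  obtain ⟨C, hCconv, hCS, hSC⟩ := hS
  refine ⟨φ ⁻¹' C, hCconv.affine_preimage φ.toAffineMap, preimage_mono hCS, ?_⟩
  rw [φ.isometry.isEmbedding.closure_preimage_of_subset_range (hCS.trans hSφ)]
  exact preimage_mono hSC

end NearlyConvex

theorem exists_affineIsometry_range_eq_affineSpan {S : Set X} (hS : S.Nonempty) :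
    ∃ φ : (affineSpan ℝ S).direction →ᵃⁱ[ℝ] X,
      range φ = affineSpan ℝ S ∧ affineSpan ℝ (φ ⁻¹' S) = ⊤ := by
  obtain ⟨p, hp⟩ := hS
  have : Nonempty S := ⟨⟨p, hp⟩⟩
  let p' : affineSpan ℝ S := ⟨p, subset_affineSpan ℝ S hp⟩
  let e := (AffineIsometryEquiv.constVSub ℝ p').symm
  refine ⟨(affineSpan ℝ S).subtypeₐᵢ.comp e.toAffineIsometry, ?_, ?_⟩
  · ext x
    simp [e.surjective.range_comp]
  · change affineSpan ℝ (e.toAffineEquiv ⁻¹' ((↑) ⁻¹' S)) = ⊤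
    rw [← AffineSubspace.comap_span, affineSpan_coe_preimage_eq_top, AffineSubspace.comap_top]

theorem NearlyConvex.openSegment_subset [FiniteDimensional ℝ X] {S : Set X}
    (hS : NearlyConvex S) {z y : X} (hz : z ∈ intrinsicInterior ℝ S) (hy : y ∈ closure S) :
    openSegment ℝ z y ⊆ S := by
  obtain ⟨φ, hrange, hspan⟩ :=
    exists_affineIsometry_range_eq_affineSpan (nonempty_of_mem (intrinsicInterior_subset hz))
  have hSφ : S ⊆ range φ := hrange ▸ subset_affineSpan ℝ S
  have hclSφ : closure S ⊆ range φ :=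
    closure_minimal hSφ (hrange ▸ (affineSpan ℝ S).closed_of_finiteDimensional)
  rw [← image_preimage_eq_of_subset hSφ, φ.intrinsicInterior_image,
    intrinsicInterior_eq_interior_of_affineSpan_eq_top hspan] at hz
  obtain ⟨z, hz, rfl⟩ := hz
  obtain ⟨y, rfl⟩ := hclSφ hy
  have hy : y ∈ closure (φ ⁻¹' S) := by
    rwa [φ.isometry.isEmbedding.closure_preimage_of_subset_range hSφ]
  rw [← φ.coe_toAffineMap, ← image_openSegment]
  exact image_subset_iff.2 <|
    (hS.preimage_affineIsometry φ hSφ).openSegment_subset_of_mem_interior hz hy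

end

theorem closure_inter_general {X : Type*} [NormedAddCommGroup X] [InnerProductSpace ℝ X]
    [FiniteDimensional ℝ X] (C D : Set X)
    (hC : NearlyConvex C) (hD : NearlyConvex D)
    (hri : (intrinsicInterior ℝ C ∩ intrinsicInterior ℝ D).Nonempty) :
    closure (C ∩ D) = closure C ∩ closure D := by
  refine (closure_inter_subset_inter_closure C D).antisymm ?_
  rintro y ⟨hyC, hyD⟩
  obtain ⟨z, hzC, hzD⟩ := hri
  have hseg : openSegment ℝ z y ⊆ C ∩ D :=
    subset_inter (hC.openSegment_subset hzC hyC) (hD.openSegment_subset hzD hyD)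
  exact closure_mono hseg (closure_openSegment (𝕜 := ℝ) z y ▸ right_mem_segment ℝ z y)

/-- If `C` and `D` are nonempty nearly convex subsets of a finite-dimensional real inner
product space with `ri C ∩ ri D ≠ ∅`, then `cl (C ∩ D) = cl C ∩ cl D`. -/
theorem closure_inter {X : Type*} [NormedAddCommGroup X] [InnerProductSpace ℝ X]
    [FiniteDimensional ℝ X] (C D : Set X) (hCne : C.Nonempty) (hDne : D.Nonempty)
    (hC : NearlyConvex C) (hD : NearlyConvex D)
    (hri : (intrinsicInterior ℝ C ∩ intrinsicInterior ℝ D).Nonempty) :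
    closure (C ∩ D) = closure C ∩ closure D :=
  closure_inter_general C D hC hD hri
end

section
/- Let A : X ⇒ X and B : X ⇒ X be maximally monotone operators that are both 3* monotone, set D = dom A − dom B and R = ran A + ran B, and suppose that ri(D ∩ R) = D ∩ R. Then ran(Id − T_{(A,B)}) = D ∩ R (an actual equality of sets). -/
open Set Pointwise

/-- Domain of a set-valued operator. -/
def svDom {X : Type*} (A : X → Set X) : Set X := {x | (A x).Nonempty}

/-- Range of a set-valued operator. -/
def svRan {X : Type*} (A : X → Set X) : Set X := ⋃ x, A x

/-- Monotonicity of a set-valued operator. -/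
def IsMonotoneOp {X : Type*} [NormedAddCommGroup X] [InnerProductSpace ℝ X]
    (A : X → Set X) : Prop :=
  ∀ ⦃x u y v : X⦄, u ∈ A x → v ∈ A y → 0 ≤ (inner ℝ (x - y) (u - v) : ℝ)

/-- Maximal monotonicity of a set-valued operator. -/
def IsMaxMonotoneOp {X : Type*} [NormedAddCommGroup X] [InnerProductSpace ℝ X]
    (A : X → Set X) : Prop :=
  IsMonotoneOp A ∧
    ∀ x u : X, (∀ y v : X, v ∈ A y → 0 ≤ (inner ℝ (x - y) (u - v) : ℝ)) → u ∈ A x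

/-- `A` is 3* monotone (rectangular): for every `x ∈ dom A` and `v ∈ ran A`, the set
`{⟪x - z, v - w⟫ : (z,w) ∈ gra A}` is bounded below. -/
def Is3StarMonotoneOp {X : Type*} [NormedAddCommGroup X] [InnerProductSpace ℝ X]
    (A : X → Set X) : Prop :=
  ∀ x ∈ svDom A, ∀ v ∈ svRan A,
    BddBelow {r : ℝ | ∃ z w : X, w ∈ A z ∧ r = (inner ℝ (x - z) (v - w) : ℝ)}

/-- `J` is the resolvent of `A`: the single-valued, everywhere-defined map with
`x - J x ∈ A (J x)` for all `x`. -/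
def IsResolventOf {X : Type*} [NormedAddCommGroup X] (J : X → X) (A : X → Set X) : Prop :=
  ∀ x : X, x - J x ∈ A (J x)

/-- The Douglas–Rachford operator `T = Id - J_A + J_B ∘ (2 J_A - Id)` built from
the resolvents `J_A` and `J_B`. -/
noncomputable def drT {X : Type*} [NormedAddCommGroup X] [NormedSpace ℝ X]
    (JA JB : X → X) : X → X :=
  fun x => x - JA x + JB ((2 : ℝ) • JA x - x)

/-!
Write `S = Id - T`; it is firmly nonexpansive and takes values in `D ∩ R`. Given `w ∈ D ∩ R`,
Banach's fixed point theorem solves the regularized equations `S xₙ + εₙ xₙ = w` with `εₙ → 0`,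
and monotonicity of `S` gives `εₙ ‖xₙ‖ ≤ ‖w - S 0‖`. Pairing the graph points of `A` and `B`
through which `S xₙ` is computed with a decomposition `p = a - b = a' + b'` of any `p ∈ D ∩ R`,
3* monotonicity bounds `⟪xₙ, p - w⟫` from above uniformly in `n`. The `xₙ` lie in the direction
of the affine span of `D ∩ R`, and `w` is a relative interior point, so these bounds for all `p`
near `w` force `(xₙ)` to be bounded; a limit point `x` of it solves `S x = w`.
-/

open RealInnerProductSpace Filter Topology Bornology

section FirmlyNonexpansive

variable {X : Type*} [NormedAddCommGroup X] [InnerProductSpace ℝ X]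

def IsFirmlyNonexpansive (S : X → X) : Prop :=
  ∀ x y, ‖S x - S y‖ ^ 2 ≤ ⟪x - y, S x - S y⟫

namespace IsFirmlyNonexpansive

variable {S : X → X} (hS : IsFirmlyNonexpansive S)
include hS

theorem inner_nonneg (x y : X) : 0 ≤ ⟪x - y, S x - S y⟫ :=
  (sq_nonneg _).trans (hS x y)

theorem norm_sub_le (x y : X) : ‖S x - S y‖ ≤ ‖x - y‖ := by
  have h := real_inner_le_norm (x - y) (S x - S y)
  nlinarith [hS x y, norm_nonneg (S x - S y), norm_nonneg (x - y)]

theorem continuous : Continuous S :=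
  (LipschitzWith.of_dist_le_mul (K := 1) fun x y => by
    simpa [dist_eq_norm] using hS.norm_sub_le x y).continuous

theorem norm_sub_sub_le (x y : X) : ‖(x - S x) - (y - S y)‖ ≤ ‖x - y‖ := by
  have hsq := norm_sub_sq_real (x - y) (S x - S y)
  rw [show (x - S x) - (y - S y) = (x - y) - (S x - S y) by abel]
  nlinarith [hS x y, norm_nonneg ((x - y) - (S x - S y)), norm_nonneg (x - y)]

theorem exists_add_smul_eq [CompleteSpace X] (w : X) {ε : ℝ} (hε : 0 < ε) :
    ∃ x, S x + ε • x = w := by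
  let f : X → X := fun x => (1 + ε)⁻¹ • (x - S x + w)
  have hf : ContractingWith ⟨(1 + ε)⁻¹, by positivity⟩ f := by
    refine ⟨?_, LipschitzWith.of_dist_le_mul fun x y => ?_⟩
    · exact NNReal.coe_lt_coe.1 (inv_lt_one_of_one_lt₀ (by linarith))
    · rw [dist_eq_norm, dist_eq_norm, ← smul_sub, norm_smul, Real.norm_of_nonneg (by positivity),
        show x - S x + w - (y - S y + w) = (x - S x) - (y - S y) by abel]
      exact mul_le_mul_of_nonneg_left (hS.norm_sub_sub_le x y) (by positivity)
  have : Nonempty X := ⟨w⟩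
  refine ⟨hf.fixedPoint f, ?_⟩
  have hx := (inv_smul_eq_iff₀ (by positivity)).1 (hf.fixedPoint_isFixedPt (f := f))
  linear_combination (norm := module) -hx

theorem mul_norm_le_of_add_smul_eq {x w : X} {ε : ℝ} (h : S x + ε • x = w) :
    ε * ‖x‖ ≤ ‖w - S 0‖ := by
  have hmono : 0 ≤ ⟪x, w - S 0⟫ - ε * ‖x‖ ^ 2 := by
    have := hS.inner_nonneg x 0
    rwa [sub_zero, show S x - S 0 = (w - S 0) - ε • x by rw [← h]; abel, inner_sub_right,
      real_inner_smul_right, real_inner_self_eq_norm_sq] at this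
  have hcs := real_inner_le_norm x (w - S 0)
  rcases (norm_nonneg x).eq_or_lt with hx | hx
  · rw [← hx, mul_zero]
    exact norm_nonneg _
  · exact le_of_mul_le_mul_left (by linarith) hx

end IsFirmlyNonexpansive

end FirmlyNonexpansive

theorem mem_range_of_add_smul_eq {E : Type*} [NormedAddCommGroup E] [NormedSpace ℝ E]
    [ProperSpace E] {S : E → E} (hS : Continuous S) {ε : ℕ → ℝ} (hε : Tendsto ε atTop (𝓝 0))
    {xs : ℕ → E} (hxs : IsBounded (range xs)) {w : E} (h : ∀ n, S (xs n) + ε n • xs n = w) :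
    w ∈ range S := by
  obtain ⟨x, -, φ, hφ, hlim⟩ := tendsto_subseq_of_bounded hxs (mem_range_self ·)
  refine ⟨x, tendsto_nhds_unique ((hS.tendsto x).comp hlim) ?_⟩
  have hSxs : ∀ n, S (xs n) = w - ε n • xs n := fun n => eq_sub_of_add_eq (h n)
  simpa [Function.comp_def, hSxs] using
    tendsto_const_nhds.sub ((hε.comp hφ.tendsto_atTop).smul hlim)

section RelativeInterior

theorem mem_direction_of_add_smul_eq {𝕜 V : Type*} [Field 𝕜] [AddCommGroup V] [Module 𝕜 V]
    {s : Set V} {S : V → V} (hS : ∀ x, S x ∈ s) {w x : V} (hw : w ∈ s) {ε : 𝕜} (hε : ε ≠ 0)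
    (h : S x + ε • x = w) : x ∈ (affineSpan 𝕜 s).direction := by
  have hεx : ε • x ∈ (affineSpan 𝕜 s).direction := by
    have := AffineSubspace.vsub_mem_direction (subset_affineSpan 𝕜 s hw)
      (subset_affineSpan 𝕜 s (hS x))
    rwa [vsub_eq_sub, ← h, add_sub_cancel_left] at this
  simpa [hε] using (affineSpan 𝕜 s).direction.smul_mem ε⁻¹ hεx

theorem exists_add_mem_of_mem_intrinsicInterior {E : Type*} [NormedAddCommGroup E]
    [NormedSpace ℝ E] {s : Set E} {w : E} (hw : w ∈ intrinsicInterior ℝ s) :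
    ∃ δ > 0, ∀ v ∈ (affineSpan ℝ s).direction, ‖v‖ < δ → w + v ∈ s := by
  obtain ⟨z, hz, rfl⟩ := hw
  obtain ⟨δ, hδ, hball⟩ := Metric.mem_nhds_iff.1 (mem_interior_iff_mem_nhds.1 hz)
  refine ⟨δ, hδ, fun v hv hvδ => ?_⟩
  let z' : affineSpan ℝ s := ⟨v +ᵥ (z : E), AffineSubspace.vadd_mem_of_mem_direction hv z.2⟩
  have hz' : z' ∈ Metric.ball z δ := by
    simpa [z', Metric.mem_ball, Subtype.dist_eq, dist_eq_norm] using hvδ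
  simpa [z', add_comm] using hball hz'

variable {X : Type*} [NormedAddCommGroup X] [InnerProductSpace ℝ X] [FiniteDimensional ℝ X]

theorem Submodule.isBounded_of_bddAbove_inner {L : Submodule ℝ X} {t : Set X} (htL : t ⊆ L)
    {δ : ℝ} (hδ : 0 < δ) (ht : ∀ v ∈ L, ‖v‖ < δ → BddAbove ((⟪·, v⟫) '' t)) :
    IsBounded t := by
  by_contra hunb
  -- a limit direction `d ∈ L` of `t` would give `⟪d, (δ / 2) • d⟫ ≤ 0`
  have hlarge : ∀ n : ℕ, ∃ y ∈ t, (n : ℝ) < ‖y‖ := by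
    intro n
    by_contra! h
    exact hunb (isBounded_iff_forall_norm_le.2 ⟨n, h⟩)
  choose y hyt hy using hlarge
  have hy0 : ∀ n, 0 < ‖y n‖ := fun n => (Nat.cast_nonneg n).trans_lt (hy n)
  obtain ⟨d, hd, φ, hφ, hlim⟩ := (isCompact_sphere (0 : X) 1).tendsto_subseq
    (x := fun n => ‖y n‖⁻¹ • y n) fun n => by simp [norm_smul, (hy0 n).ne']
  have hd1 : ‖d‖ = 1 := by simpa using hd
  have hdL : d ∈ L := (Submodule.closed_of_finiteDimensional L).mem_of_tendsto hlim
    (Eventually.of_forall fun n => L.smul_mem _ (htL (hyt _)))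
  obtain ⟨K, hK⟩ := ht ((δ / 2) • d) (L.smul_mem _ hdL) (by
    rw [norm_smul, hd1, Real.norm_of_nonneg (by positivity)]
    linarith)
  have hinv : Tendsto (fun j => ‖y (φ j)‖⁻¹) atTop (𝓝 0) :=
    tendsto_inv_atTop_zero.comp (tendsto_atTop_mono (fun j => (hy (φ j)).le)
      (tendsto_natCast_atTop_atTop.comp hφ.tendsto_atTop))
  have hle : ⟪d, (δ / 2) • d⟫ ≤ 0 * K :=
    le_of_tendsto_of_tendsto' (hlim.inner tendsto_const_nhds) (hinv.mul_const K) fun j => by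
      simp only [Function.comp_apply, real_inner_smul_left]
      exact mul_le_mul_of_nonneg_left (hK ⟨_, hyt _, rfl⟩) (inv_nonneg.2 (norm_nonneg _))
  rw [real_inner_smul_right, real_inner_self_eq_norm_sq, hd1] at hle
  linarith

theorem isBounded_of_mem_intrinsicInterior {s t : Set X} {w : X}
    (hw : w ∈ intrinsicInterior ℝ s) (htL : t ⊆ (affineSpan ℝ s).direction)
    (ht : ∀ p ∈ s, BddAbove ((⟪·, p - w⟫) '' t)) : IsBounded t := by
  obtain ⟨δ, hδ, hball⟩ := exists_add_mem_of_mem_intrinsicInterior hw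
  refine Submodule.isBounded_of_bddAbove_inner htL hδ fun v hv hvδ => ?_
  simpa using ht (w + v) (hball v hv hvδ)

end RelativeInterior

section DouglasRachford

variable {X : Type*} [NormedAddCommGroup X] [InnerProductSpace ℝ X]
  {A B : X → Set X} {JA JB : X → X}

theorem sub_drT_apply (x : X) : x - drT JA JB x = JA x - JB ((2 : ℝ) • JA x - x) := by
  simp only [drT]
  abel

theorem sub_drT_mem (hJA : IsResolventOf JA A) (hJB : IsResolventOf JB B) (x : X) :
    x - drT JA JB x ∈ (svDom A - svDom B) ∩ (svRan A + svRan B) := by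
  rw [sub_drT_apply]
  refine ⟨⟨_, ⟨_, hJA x⟩, _, ⟨_, hJB _⟩, rfl⟩, ⟨_, mem_iUnion_of_mem _ (hJA x), _,
    mem_iUnion_of_mem _ (hJB ((2 : ℝ) • JA x - x)), by module⟩⟩

theorem isFirmlyNonexpansive_sub_drT (hA : IsMonotoneOp A) (hB : IsMonotoneOp B)
    (hJA : IsResolventOf JA A) (hJB : IsResolventOf JB B) :
    IsFirmlyNonexpansive fun x => x - drT JA JB x := by
  intro x y
  simp only [sub_drT_apply]
  set a := JA x
  set a' := JA y
  set b := JB ((2 : ℝ) • a - x)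
  set b' := JB ((2 : ℝ) • a' - y)
  have hmA : 0 ≤ ⟪a - a', (x - a) - (y - a')⟫ := hA (hJA x) (hJA y)
  have hmB : 0 ≤ ⟪b - b', ((2 : ℝ) • a - x - b) - ((2 : ℝ) • a' - y - b')⟫ :=
    hB (hJB _) (hJB _)
  clear_value a a' b b'
  have key : ⟪x - y, (a - b) - (a' - b')⟫ - ‖(a - b) - (a' - b')‖ ^ 2 =
      ⟪a - a', (x - a) - (y - a')⟫ + ⟪b - b', ((2 : ℝ) • a - x - b) - ((2 : ℝ) • a' - y - b')⟫ := by
    simp only [inner_sub_left, inner_sub_right,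
      real_inner_smul_right, ← real_inner_self_eq_norm_sq, real_inner_comm]
    ring
  linarith

theorem inner_sub_add_inner_sub_eq_of_add_smul_eq {PA PB qA qB a b x w : X} {ε : ℝ}
    (hp : PA - PB = qA + qB) (hw : a - b + ε • x = w) :
    ⟪PA - a, qA - (x - a)⟫ + ⟪PB - b, qB - ((2 : ℝ) • a - x - b)⟫
      = ⟪PA, qA⟫ + ⟪PB, qB⟫ - ⟪PB - qB, w⟫ - ‖w‖ ^ 2 - ⟪x, PA - PB - w⟫
        + ε * ⟪x, PB - qB + (2 : ℝ) • w⟫ - ε * (1 + ε) * ‖x‖ ^ 2 := by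
  obtain rfl : PA = qA + qB + PB := by rw [← hp]; abel
  subst hw
  simp only [inner_add_left, inner_add_right, inner_sub_left, inner_sub_right,
    real_inner_smul_right, ← real_inner_self_eq_norm_sq, real_inner_comm]
  ring

theorem exists_forall_inner_sub_le (hA3 : Is3StarMonotoneOp A) (hB3 : Is3StarMonotoneOp B)
    (hJA : IsResolventOf JA A) (hJB : IsResolventOf JB B) {p : X}
    (hp : p ∈ (svDom A - svDom B) ∩ (svRan A + svRan B)) (w : X) (C : ℝ) :
    ∃ K, ∀ x : X, ∀ ε : ℝ, 0 ≤ ε → ε * ‖x‖ ≤ C → x - drT JA JB x + ε • x = w →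
      ⟪x, p - w⟫ ≤ K := by
  obtain ⟨⟨PA, hPA, PB, hPB, rfl⟩, qA, hqA, qB, hqB, hq⟩ := hp
  obtain ⟨c₁, hc₁⟩ := hA3 PA hPA qA hqA
  obtain ⟨c₂, hc₂⟩ := hB3 PB hPB qB hqB
  set r := PB - qB + (2 : ℝ) • w
  refine ⟨⟪PA, qA⟫ + ⟪PB, qB⟫ - ⟪PB - qB, w⟫ - ‖w‖ ^ 2 - c₁ - c₂ + C * ‖r‖,
    fun x ε hε hC hx => ?_⟩
  rw [sub_drT_apply] at hx
  have hA := hc₁ ⟨_, _, hJA x, rfl⟩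
  have hB := hc₂ ⟨_, _, hJB ((2 : ℝ) • JA x - x), rfl⟩
  have hid := inner_sub_add_inner_sub_eq_of_add_smul_eq hq.symm hx
  have hr : ε * ⟪x, r⟫ ≤ C * ‖r‖ :=
    calc ε * ⟪x, r⟫ ≤ ε * (‖x‖ * ‖r‖) :=
          mul_le_mul_of_nonneg_left (real_inner_le_norm _ _) hε
      _ = ε * ‖x‖ * ‖r‖ := by ring
      _ ≤ C * ‖r‖ := mul_le_mul_of_nonneg_right hC (norm_nonneg _)
  have hsq : 0 ≤ ε * (1 + ε) * ‖x‖ ^ 2 := by positivity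
  linarith

end DouglasRachford

/-- For maximally monotone, 3* monotone `A, B`, if `ri (D ∩ R) = D ∩ R` where
`D = dom A - dom B` and `R = ran A + ran B`, then `ran (Id - T_{(A,B)}) = D ∩ R`. -/
theorem ran_id_sub_drT_eq {X : Type*} [NormedAddCommGroup X] [InnerProductSpace ℝ X]
    [FiniteDimensional ℝ X] (A B : X → Set X)
    (hA : IsMaxMonotoneOp A) (hB : IsMaxMonotoneOp B)
    (hA3 : Is3StarMonotoneOp A) (hB3 : Is3StarMonotoneOp B)
    (JA JB : X → X) (hJA : IsResolventOf JA A) (hJB : IsResolventOf JB B)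
    (hri : intrinsicInterior ℝ ((svDom A - svDom B) ∩ (svRan A + svRan B)) =
      (svDom A - svDom B) ∩ (svRan A + svRan B)) :
    Set.range (fun x => x - drT JA JB x) =
      (svDom A - svDom B) ∩ (svRan A + svRan B) := by
  refine Subset.antisymm (range_subset_iff.2 (sub_drT_mem hJA hJB)) fun w hw => ?_
  have hS := isFirmlyNonexpansive_sub_drT hA.1 hB.1 hJA hJB
  have hε : ∀ n : ℕ, (0 : ℝ) < 1 / (n + 1) := fun n => by positivity
  choose xs hxs using fun n => hS.exists_add_smul_eq w (hε n)
  have hbdd : IsBounded (range xs) := by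
    refine isBounded_of_mem_intrinsicInterior (hri.symm ▸ hw) ?_ fun p hp => ?_
    · rintro _ ⟨n, rfl⟩
      exact mem_direction_of_add_smul_eq (sub_drT_mem hJA hJB) hw (hε n).ne' (hxs n)
    · obtain ⟨K, hK⟩ := exists_forall_inner_sub_le hA3 hB3 hJA hJB hp w ‖w - (0 - drT JA JB 0)‖
      refine ⟨K, ?_⟩
      rintro _ ⟨_, ⟨n, rfl⟩, rfl⟩
      exact hK _ _ (hε n).le (hS.mul_norm_le_of_add_smul_eq (hxs n)) (hxs n)
  exact mem_range_of_add_smul_eq hS.continuous tendsto_one_div_add_atTop_nhds_zero_nat hbdd hxs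
end
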